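/- Connection between Al-Salam–Chihara and big q-Hermite polynomials: for all n ≥ 0 and all x, a, b, q, Q_n(x|a,b,q) = ∑_{j=0}^{n} [n choose j]_q (-1)^j b^j q^{j(j-1)/2} h_{n-j}(x|a,q). -/

import Mathlib

/-- The Gaussian (q-)binomial coefficient, defined via the q-Pascal rule. -/
def gaussBinom (q : ℂ) : ℕ → ℕ → ℂ
  | _, 0 => 1
  | 0, _ + 1 => 0
  | n + 1, k + 1 => gaussBinom q n k + q ^ (k + 1) * gaussBinom q n (k + 1)

/-- The big continuous q-Hermite polynomials. -/
def bigQHermite (q a x : ℂ) : ℕ → ℂ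
  | 0 => 1
  | 1 => 2 * x - a
  | n + 2 => (2 * x - a * q ^ (n + 1)) * bigQHermite q a x (n + 1)
      - (1 - q ^ (n + 1)) * bigQHermite q a x n

/-- The Al-Salam–Chihara polynomials. -/
def alSalamChihara (q a b x : ℂ) : ℕ → ℂ
  | 0 => 1
  | 1 => 2 * x - (a + b)
  | n + 2 => (2 * x - (a + b) * q ^ (n + 1)) * alSalamChihara q a b x (n + 1)
      - (1 - a * b * q ^ n) * (1 - q ^ (n + 1)) * alSalamChihara q a b x n

/-! Let `S_n f = ∑ⱼ [n, j]_q (-b)^j q^(j choose 2) f (n - j)`, a linear functional of the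
sequence `f`. The two q-Pascal rules give `S_n f(· + 1) = S_{n+1} f + b qⁿ S_n f`, and the
absorption identity `(1 - q^(n+1-j)) [n+1, j]_q = (1 - q^(n+1)) [n, j]_q` gives
`S_{n+1} ((1 - q^m) f (m - 1)) = (1 - q^(n+1)) S_n f`. Writing the big q-Hermite recurrence as
`2x h_m = h_{m+1} + a h_m - a (1 - q^m) h_m + (1 - q^m) h_{m-1}` and applying `S_{n+1}`, these two
rules turn it into the Al-Salam–Chihara recurrence for `S_n h`; the initial values agree. -/

namespace gaussBinom

variable (q : ℂ)

theorem zero_right (n : ℕ) : gaussBinom q n 0 = 1 := by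
  cases n <;> rfl

theorem succ_succ (n k : ℕ) :
    gaussBinom q (n + 1) (k + 1) = gaussBinom q n k + q ^ (k + 1) * gaussBinom q n (k + 1) :=
  rfl

theorem eq_zero_of_lt {n k : ℕ} (h : n < k) : gaussBinom q n k = 0 := by
  induction n generalizing k with
  | zero => obtain ⟨k, rfl⟩ := Nat.exists_eq_succ_of_ne_zero h.ne'; rfl
  | succ n ih =>
    obtain ⟨k, rfl⟩ := Nat.exists_eq_succ_of_ne_zero (Nat.ne_zero_of_lt h)
    rw [succ_succ, ih (by omega), ih (by omega), mul_zero, add_zero]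

theorem pow_sub_mul_pow_mul (n k j : ℕ) :
    q ^ (n - k) * q ^ k * gaussBinom q n (k + j) = q ^ n * gaussBinom q n (k + j) := by
  rcases le_or_gt k n with h | h
  · rw [pow_sub_mul_pow q h]
  · rw [eq_zero_of_lt q (by omega), mul_zero, mul_zero]

theorem succ_succ' (n k : ℕ) :
    gaussBinom q (n + 1) (k + 1) = q ^ (n - k) * gaussBinom q n k + gaussBinom q n (k + 1) := by
  induction n generalizing k with
  | zero => cases k <;> simp [gaussBinom]
  | succ n ih =>
    cases k with
    | zero =>
      have h := ih 0
      simp only [zero_right, succ_succ, Nat.sub_zero, zero_add, pow_one, mul_one] at h ⊢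
      linear_combination q * h
    | succ k =>
      rw [Nat.add_sub_add_right]
      linear_combination succ_succ q (n + 1) (k + 1) + ih k - q ^ (n - k) * succ_succ q n k
        + q ^ (k + 2) * ih (k + 1) - succ_succ q n (k + 1)
        + q * pow_sub_mul_pow_mul q n (k + 1) 0 - q * pow_sub_mul_pow_mul q n k 1

theorem one_sub_pow_mul_succ (n k : ℕ) :
    (1 - q ^ (n + 1 - k)) * gaussBinom q (n + 1) k = (1 - q ^ (n + 1)) * gaussBinom q n k := by
  cases k with
  | zero => simp [zero_right]
  | succ k =>
    rw [Nat.add_sub_add_right]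
    linear_combination succ_succ' q n k - q ^ (n - k) * succ_succ q n k
      - q * pow_sub_mul_pow_mul q n k 1

end gaussBinom

open Finset

/-- `(-b)^j q^(j choose 2) / (q; q)_j` is the coefficient of `t^j` in Euler's expansion of
`(bt; q)_∞`. -/
def eulerCoeff (b q : ℂ) (j : ℕ) : ℂ := (-b) ^ j * q ^ j.choose 2

theorem eulerCoeff_succ (b q : ℂ) (j : ℕ) :
    eulerCoeff b q (j + 1) = -b * q ^ j * eulerCoeff b q j := by
  rw [eulerCoeff, eulerCoeff, Nat.choose_succ_succ', Nat.choose_one_right, pow_succ, pow_add]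
  ring

def qBinomSum (b q : ℂ) (n : ℕ) : (ℕ → ℂ) →ₗ[ℂ] ℂ where
  toFun f := ∑ j ∈ range (n + 1), gaussBinom q n j * eulerCoeff b q j * f (n - j)
  map_add' f g := by simp only [Pi.add_apply, mul_add, sum_add_distrib]
  map_smul' c f := by
    simp only [Pi.smul_apply, smul_eq_mul, mul_sum, RingHom.id_apply]
    exact sum_congr rfl fun j _ ↦ by ring

namespace qBinomSum

variable (b q : ℂ)

theorem apply (n : ℕ) (f : ℕ → ℂ) :
    qBinomSum b q n f = ∑ j ∈ range (n + 1), gaussBinom q n j * eulerCoeff b q j * f (n - j) :=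
  rfl

theorem zero (f : ℕ → ℂ) : qBinomSum b q 0 f = f 0 := by
  simp [apply, gaussBinom.zero_right, eulerCoeff]

theorem one (f : ℕ → ℂ) : qBinomSum b q 1 f = f 1 - b * f 0 := by
  simp [apply, sum_range_succ, gaussBinom, eulerCoeff, sub_eq_add_neg]

theorem shift (n : ℕ) (f : ℕ → ℂ) :
    qBinomSum b q n (fun m ↦ f (m + 1)) =
      qBinomSum b q (n + 1) f + b * q ^ n * qBinomSum b q n f := by
  have hlhs : qBinomSum b q n (fun m ↦ f (m + 1)) = ∑ j ∈ range (n + 1),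
      gaussBinom q n (j + 1) * eulerCoeff b q (j + 1) * f (n - j) + f (n + 1) := by
    calc qBinomSum b q n (fun m ↦ f (m + 1))
        = ∑ j ∈ range (n + 2), gaussBinom q n j * eulerCoeff b q j * f (n + 1 - j) := by
          rw [sum_range_succ, gaussBinom.eq_zero_of_lt q (Nat.lt_succ_self n), zero_mul, zero_mul,
            add_zero, apply]
          exact sum_congr rfl fun j hj ↦ by
            rw [Nat.sub_add_comm (Nat.lt_succ_iff.mp (mem_range.mp hj))]
      _ = _ := by
          rw [sum_range_succ']
          simp [gaussBinom.zero_right, eulerCoeff]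
  have hrhs : qBinomSum b q (n + 1) f = ∑ j ∈ range (n + 1),
      gaussBinom q (n + 1) (j + 1) * eulerCoeff b q (j + 1) * f (n - j) + f (n + 1) := by
    rw [apply, sum_range_succ']
    simp [eulerCoeff, gaussBinom.zero_right]
  rw [hlhs, hrhs, apply, mul_sum, add_right_comm, ← sum_add_distrib]
  refine congrArg (· + _) (sum_congr rfl fun j _ ↦ ?_)
  rw [gaussBinom.succ_succ', eulerCoeff_succ]
  linear_combination b * eulerCoeff b q j * f (n - j) * gaussBinom.pow_sub_mul_pow_mul q n j 0

theorem one_sub_pow_mul (n : ℕ) (f : ℕ → ℂ) :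
    qBinomSum b q (n + 1) (fun m ↦ (1 - q ^ m) * f (m - 1)) =
      (1 - q ^ (n + 1)) * qBinomSum b q n f := by
  simp only [apply, sum_range_succ _ (n + 1), Nat.sub_self, pow_zero, sub_self, zero_mul, mul_zero,
    add_zero, mul_sum]
  refine sum_congr rfl fun j _ ↦ ?_
  rw [show n + 1 - j - 1 = n - j by omega]
  linear_combination eulerCoeff b q j * f (n - j) * gaussBinom.one_sub_pow_mul_succ q n j

end qBinomSum

theorem two_mul_mul_bigQHermite (q a x : ℂ) (m : ℕ) :
    2 * x * bigQHermite q a x m = bigQHermite q a x (m + 1) + a * q ^ m * bigQHermite q a x m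
      + (1 - q ^ m) * bigQHermite q a x (m - 1) := by
  cases m with
  | zero => simp [bigQHermite]
  | succ m => simp only [bigQHermite, Nat.add_sub_cancel]; ring

theorem qBinomSum_bigQHermite_succ_succ (q a b x : ℂ) (n : ℕ) :
    qBinomSum b q (n + 2) (bigQHermite q a x) =
      (2 * x - (a + b) * q ^ (n + 1)) * qBinomSum b q (n + 1) (bigQHermite q a x)
        - (1 - a * b * q ^ n) * (1 - q ^ (n + 1)) * qBinomSum b q n (bigQHermite q a x) := by
  set H := bigQHermite q a x
  have hH : (2 * x) • H = (fun m ↦ H (m + 1)) + a • H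
      - a • (fun m ↦ (1 - q ^ m) * H (m - 1 + 1)) + (fun m ↦ (1 - q ^ m) * H (m - 1)) := by
    funext m
    have hm : (1 - q ^ m) * H (m - 1 + 1) = (1 - q ^ m) * H m := by cases m <;> simp
    simp only [Pi.add_apply, Pi.sub_apply, Pi.smul_apply, smul_eq_mul, hm]
    linear_combination two_mul_mul_bigQHermite q a x m
  have h := congrArg (qBinomSum b q (n + 1)) hH
  simp only [map_add, map_sub, map_smul, smul_eq_mul] at h
  have s₁ := qBinomSum.shift b q (n + 1) H
  have s₀ := qBinomSum.shift b q n H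
  have d₁ := qBinomSum.one_sub_pow_mul b q n (fun m ↦ H (m + 1))
  have d₀ := qBinomSum.one_sub_pow_mul b q n H
  linear_combination -h - s₁ - d₀ + a * d₁ + a * (1 - q ^ (n + 1)) * s₀

theorem alSalamChihara_eq_of_recurrence (q a b x : ℂ) {s : ℕ → ℂ} (h₀ : s 0 = 1)
    (h₁ : s 1 = 2 * x - (a + b))
    (hs : ∀ n, s (n + 2) = (2 * x - (a + b) * q ^ (n + 1)) * s (n + 1)
      - (1 - a * b * q ^ n) * (1 - q ^ (n + 1)) * s n) (n : ℕ) :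
    alSalamChihara q a b x n = s n := by
  induction n using Nat.twoStepInduction with
  | zero => exact h₀.symm
  | one => exact h₁.symm
  | more n ih₀ ih₁ => rw [alSalamChihara, ih₀, ih₁, hs]

/-- `Q_n(x|a,b,q) = ∑_{j=0}^n [n choose j]_q (-1)^j b^j q^{j(j-1)/2} h_{n-j}(x|a,q)`. -/
theorem alSalamChihara_eq_sum_bigQHermite (n : ℕ) (x a b q : ℂ) :
    alSalamChihara q a b x n =
      ∑ j ∈ Finset.range (n + 1),
        gaussBinom q n j * (-1) ^ j * b ^ j * q ^ (j * (j - 1) / 2) *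
          bigQHermite q a x (n - j) := by
  rw [alSalamChihara_eq_of_recurrence q a b x (s := fun n ↦ qBinomSum b q n (bigQHermite q a x))
    (by simp [qBinomSum.zero, bigQHermite]) (by simp [qBinomSum.one, bigQHermite, sub_sub])
    (qBinomSum_bigQHermite_succ_succ q a b x), qBinomSum.apply]
  refine sum_congr rfl fun j _ ↦ ?_
  rw [eulerCoeff, neg_pow, Nat.choose_two_right]
  ring
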